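/- Let T be a left-invertible bounded operator on a Hilbert space with 0 ∈ σ(T) and Cauchy dual T' = T(T*T)^{-1}. If σ_r(T') ⊆ closure(𝔻), then 𝔻 ⊆ σ_r(T) \ σ_l(T). -/

import Mathlib

open ContinuousLinearMap

/-- The Cauchy dual `T' = T (T*T)⁻¹` of a left-invertible operator. -/
noncomputable def cauchyDual {H : Type*} [NormedAddCommGroup H] [InnerProductSpace ℂ H]
    [CompleteSpace H] (T : H →L[ℂ] H) : H →L[ℂ] H :=
  T * Ring.inverse (adjoint T * T)

/-- The left spectrum of `T`. -/
def leftSpectrum {H : Type*} [NormedAddCommGroup H] [InnerProductSpace ℂ H] [CompleteSpace H]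
    (T : H →L[ℂ] H) : Set ℂ :=
  {z | ¬ ∃ L : H →L[ℂ] H, L * (T - z • 1) = 1}

/-- The right spectrum of `T`. -/
def rightSpectrum {H : Type*} [NormedAddCommGroup H] [InnerProductSpace ℂ H] [CompleteSpace H]
    (T : H →L[ℂ] H) : Set ℂ :=
  {z | ¬ ∃ R : H →L[ℂ] H, (T - z • 1) * R = 1}

open Metric Topology

/-! With `S = T'*`, a left inverse of `T`, one has `S (T - z) = 1 - z S = (1 - z̄ T')*`, and
`1 - z̄ T'` is right invertible for `|z| < 1` because `σ_r(T') ⊆ closure 𝔻`; so `T - z` is left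
invertible on `𝔻`. A perturbation argument shows that a point `z ∈ σ(T)` with `T - z` left
invertible is an interior point of `σ(T)`. Hence `σ(T) ∩ 𝔻` is open and closed in `𝔻` and contains
`0`, so `𝔻 ⊆ σ(T)`: on `𝔻`, `T - z` is left invertible but not invertible, hence not right
invertible. -/

theorem isUnit_of_mul_eq_one_of_norm_mul_sub_lt_one {A : Type*} [NormedRing A] [CompleteSpace A]
    {l x y : A} (hlx : l * x = 1) (hy : IsUnit y) (hxy : ‖l‖ * ‖x - y‖ < 1) : IsUnit x := by
  have hly : l * y = 1 - l * (x - y) := by rw [mul_sub, hlx, sub_sub_cancel]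
  have hl : IsUnit l := by
    obtain ⟨u, rfl⟩ := hy
    rw [← Units.isUnit_mul_units l u, hly]
    exact isUnit_one_sub_of_norm_lt_one ((norm_mul_le _ _).trans_lt hxy)
  obtain ⟨u, rfl⟩ := hl
  rw [Units.eq_inv_of_mul_eq_one_left hlx]
  exact u⁻¹.isUnit

section BanachAlgebra

variable {𝕜 A : Type*} [NormedField 𝕜] [NormedRing A] [NormedAlgebra 𝕜 A]

theorem spectrum.mem_iff_not_isUnit_sub_smul_one {a : A} {z : 𝕜} :
    z ∈ spectrum 𝕜 a ↔ ¬IsUnit (a - z • 1) := by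
  rw [spectrum.mem_iff, Algebra.algebraMap_eq_smul_one, ← neg_sub, IsUnit.neg_iff]

variable [CompleteSpace A]

theorem spectrum_mem_nhds_of_mul_sub_smul_one_eq_one {a l : A} {z : 𝕜}
    (hz : z ∈ spectrum 𝕜 a) (hl : l * (a - z • 1) = 1) : spectrum 𝕜 a ∈ 𝓝 z := by
  have hnear : ∀ᶠ w in 𝓝 z, ‖l‖ * ‖(a - z • 1) - (a - w • 1)‖ < 1 := by
    have hcont : Continuous fun w : 𝕜 => ‖l‖ * ‖(a - z • (1 : A)) - (a - w • 1)‖ := by fun_prop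
    exact hcont.continuousAt.eventually_lt continuousAt_const (by simp)
  filter_upwards [hnear] with w hw
  by_contra hw'
  rw [spectrum.mem_iff_not_isUnit_sub_smul_one, not_not] at hw'
  exact spectrum.mem_iff_not_isUnit_sub_smul_one.mp hz
    (isUnit_of_mul_eq_one_of_norm_mul_sub_lt_one hl hw' hw)

theorem IsPreconnected.subset_spectrum_of_forall_exists_mul_sub_smul_one_eq_one {a : A}
    {U : Set 𝕜} (hU : IsPreconnected U) (hUσ : (U ∩ spectrum 𝕜 a).Nonempty)
    (hleft : ∀ z ∈ U, ∃ l, l * (a - z • 1) = 1) : U ⊆ spectrum 𝕜 a := by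
  have hint : ∀ z ∈ U, z ∈ spectrum 𝕜 a → z ∈ interior (spectrum 𝕜 a) := fun z hzU hzσ => by
    obtain ⟨l, hl⟩ := hleft z hzU
    exact mem_interior_iff_mem_nhds.mpr (spectrum_mem_nhds_of_mul_sub_smul_one_eq_one hzσ hl)
  refine (hU.subset_of_closure_inter_subset isOpen_interior ?_ ?_).trans interior_subset
  · obtain ⟨z, hzU, hzσ⟩ := hUσ
    exact ⟨z, hzU, hint z hzU hzσ⟩
  · rintro z ⟨hzc, hzU⟩
    exact hint z hzU (closure_minimal interior_subset (spectrum.isClosed a) hzc)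

end BanachAlgebra

theorem isUnit_adjoint_comp_self_of_comp_eq_id {𝕜 E F : Type*} [RCLike 𝕜]
    [NormedAddCommGroup E] [InnerProductSpace 𝕜 E] [CompleteSpace E]
    [NormedAddCommGroup F] [InnerProductSpace 𝕜 F] [CompleteSpace F]
    {T : E →L[𝕜] F} {L : F →L[𝕜] E} (hL : L ∘L T = .id 𝕜 E) : IsUnit (adjoint T ∘L T) := by
  refine isUnit_of_forall_le_norm_inner_map _ (c := ⟨(‖L‖ ^ 2 + 1)⁻¹, by positivity⟩)
    (by change (0 : ℝ) < _; positivity) fun x => ?_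
  have hlow : ‖x‖ ≤ ‖L‖ * ‖T x‖ := by
    simpa [← ContinuousLinearMap.comp_apply, hL] using L.le_opNorm (T x)
  have hsq : ‖x‖ ^ 2 ≤ (‖L‖ ^ 2 + 1) * ‖T x‖ ^ 2 := by
    nlinarith [sq_nonneg (‖T x‖), norm_nonneg x]
  calc ‖x‖ ^ 2 * (‖L‖ ^ 2 + 1)⁻¹ ≤ ‖T x‖ ^ 2 := by
        rw [mul_inv_le_iff₀ (by positivity), mul_comm]; exact hsq
    _ = RCLike.re (inner 𝕜 ((adjoint T ∘L T) x) x) := apply_norm_sq_eq_inner_adjoint_left T x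
    _ ≤ _ := RCLike.re_le_norm _

section Hilbert

variable {H : Type*} [NormedAddCommGroup H] [InnerProductSpace ℂ H] [CompleteSpace H]

theorem adjoint_cauchyDual (T : H →L[ℂ] H) :
    adjoint (cauchyDual T) = Ring.inverse (adjoint T * T) * adjoint T := by
  simp only [← star_eq_adjoint, cauchyDual, star_mul, ← Ring.inverse_star, star_star]

theorem adjoint_cauchyDual_mul_self {T L : H →L[ℂ] H} (hL : L * T = 1) :
    adjoint (cauchyDual T) * T = 1 := by
  rw [adjoint_cauchyDual, mul_assoc]
  exact Ring.inverse_mul_cancel _ (isUnit_adjoint_comp_self_of_comp_eq_id hL)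

theorem exists_one_sub_smul_mul_eq_one_of_mem_ball {B : H →L[ℂ] H}
    (h : rightSpectrum B ⊆ closedBall (0 : ℂ) 1) {w : ℂ} (hw : w ∈ ball (0 : ℂ) 1) :
    ∃ R : H →L[ℂ] H, (1 - w • B) * R = 1 := by
  rcases eq_or_ne w 0 with rfl | hw0
  · exact ⟨1, by simp⟩
  have hw_inv : w⁻¹ ∉ rightSpectrum B := fun hmem => by
    have := h hmem
    rw [mem_ball_zero_iff] at hw
    rw [mem_closedBall_zero_iff, norm_inv] at this
    exact absurd ((one_lt_inv₀ (norm_pos_iff.mpr hw0)).mpr hw) this.not_gt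
  obtain ⟨R, hR⟩ := not_not.mp hw_inv
  refine ⟨(-w)⁻¹ • R, ?_⟩
  have hfactor : 1 - w • B = (-w) • (B - w⁻¹ • 1) := by
    rw [smul_sub, smul_smul, neg_mul, mul_inv_cancel₀ hw0, neg_smul, neg_smul, one_smul]
    abel
  rw [hfactor, smul_mul_smul, hR, mul_inv_cancel₀ (neg_ne_zero.mpr hw0), one_smul]

theorem exists_mul_sub_smul_one_eq_one_of_mem_ball {T L : H →L[ℂ] H} (hL : L * T = 1)
    (h : rightSpectrum (cauchyDual T) ⊆ closedBall (0 : ℂ) 1) {z : ℂ} (hz : z ∈ ball (0 : ℂ) 1) :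
    ∃ L' : H →L[ℂ] H, L' * (T - z • 1) = 1 := by
  set S := adjoint (cauchyDual T)
  have hST : S * T = 1 := adjoint_cauchyDual_mul_self hL
  obtain ⟨R, hR⟩ :=
    exists_one_sub_smul_mul_eq_one_of_mem_ball h (w := starRingEnd ℂ z) (by simpa using hz)
  have hRS : star R * (1 - z • S) = 1 := by
    simpa [S, star_mul, star_sub, star_smul, star_eq_adjoint] using congrArg star hR
  refine ⟨star R * S, ?_⟩
  rw [mul_assoc, mul_sub, hST, mul_smul_comm, mul_one, hRS]

end Hilbert

/-- If `T` is left-invertible, `0 ∈ σ(T)` and `σ_r(T') ⊆ closure 𝔻`, then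
`𝔻 ⊆ σ_r(T) \ σ_l(T)`. -/
theorem stmt_13 {H : Type*} [NormedAddCommGroup H] [InnerProductSpace ℂ H] [CompleteSpace H]
    (T : H →L[ℂ] H) (hli : ∃ L : H →L[ℂ] H, L * T = 1)
    (h0 : (0 : ℂ) ∈ spectrum ℂ T)
    (h : rightSpectrum (cauchyDual T) ⊆ Metric.closedBall (0 : ℂ) 1) :
    Metric.ball (0 : ℂ) 1 ⊆ rightSpectrum T \ leftSpectrum T := by
  obtain ⟨L, hL⟩ := hli
  have hleft (z : ℂ) (hz : z ∈ ball (0 : ℂ) 1) : ∃ L' : H →L[ℂ] H, L' * (T - z • 1) = 1 :=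
    exists_mul_sub_smul_one_eq_one_of_mem_ball hL h hz
  have hσ : ball (0 : ℂ) 1 ⊆ spectrum ℂ T :=
    (convex_ball (0 : ℂ) 1).isPreconnected.subset_spectrum_of_forall_exists_mul_sub_smul_one_eq_one
      ⟨0, mem_ball_self one_pos, h0⟩ hleft
  intro z hz
  refine ⟨fun hright => ?_, not_not.mpr (hleft z hz)⟩
  exact spectrum.mem_iff_not_isUnit_sub_smul_one.mp (hσ hz)
    (isUnit_iff_exists_and_exists.mpr ⟨hright, hleft z hz⟩)
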